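/- Let X be a ℤ^d-SFT defined by forbidding patterns of shape F_n, and let k > n, ℓ = k − n + 1. Suppose b is a pattern on the boundary region ∂_n F_k that is periodic with period ℓ in each cardinal direction, and suppose there are N ≥ 1 patterns on F_k allowed in X whose restriction to ∂_n F_k equals b. Then the periodic entropy of X satisfies h_per(X) ≥ (1/ℓ^d)·log N; in particular h(X) ≥ (1/ℓ^d)·log N. -/

import Mathlib

/-- The shift action of `ℤ^d` on configurations `(Fin d → ℤ) → A`. -/
def shiftZd {A : Type*} {d : ℕ} (p : Fin d → ℤ) (x : (Fin d → ℤ) → A) : (Fin d → ℤ) → A :=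
  fun q => x (fun i => p i + q i)

/-- The `F_n`-pattern of the configuration `x` at the translate of `F_n` with corner `v`. -/
def patternOf {A : Type*} {d n : ℕ} (x : (Fin d → ℤ) → A) (v : Fin d → ℤ) :
    (Fin d → Fin n) → A :=
  fun t => x (fun i => v i + (t i : ℤ))

/-- The `ℤ^d`-SFT defined by forbidding the `F_n`-patterns in `Forb`. -/
def sftOf {A : Type*} {d n : ℕ} (Forb : Set ((Fin d → Fin n) → A)) :
    Set ((Fin d → ℤ) → A) :=
  {x | ∀ v : Fin d → ℤ, patternOf x v ∉ Forb}

/-- The totally periodic points of `Y`: points of `Y` with finite shift orbit. -/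
def perPts {A : Type*} {d : ℕ} (Y : Set ((Fin d → ℤ) → A)) : Set ((Fin d → ℤ) → A) :=
  {x ∈ Y | ({y | ∃ p : Fin d → ℤ, y = shiftZd p x}).Finite}

/-- `Wpat m Y` is the set of `m`-cube patterns appearing (up to translation)
in points of `Y`. -/
def Wpat {A : Type*} {d : ℕ} (m : ℕ) (Y : Set ((Fin d → ℤ) → A)) :
    Set ((Fin d → Fin m) → A) :=
  {w | ∃ x ∈ Y, ∃ v : Fin d → ℤ, ∀ t : Fin d → Fin m, w t = x (fun i => v i + (t i : ℤ))}

/-- The entropy-type growth rate of `Y ⊆ A^(ℤ^d)`: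
`limsup_m (1/m^d)·log #(patterns of shape F_m in Y)`. Applied to a `ℤ^d`-SFT `X` this is
its topological entropy `h(X)`; applied to the set of totally periodic points of `X` it is
the periodic entropy `h_per(X)`. -/
noncomputable def hTop {A : Type*} (d : ℕ) (Y : Set ((Fin d → ℤ) → A)) : ℝ :=
  Filter.limsup (fun m : ℕ => Real.log ((Wpat m Y).ncard) / (m : ℝ) ^ d) Filter.atTop

/-- The cube `F_k = [1,k]^d` in `ℤ^d`. -/
def Fcube (d k : ℕ) : Set (Fin d → ℤ) := {x | ∀ i, 1 ≤ x i ∧ x i ≤ (k : ℤ)}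

/-- The inner boundary `∂_n F_k` of thickness `n`. -/
def bdryN (d n k : ℕ) : Set (Fin d → ℤ) :=
  {x ∈ Fcube d k | ∃ y ∉ Fcube d k, ∀ i, |x i - y i| ≤ (n : ℤ)}

/-- The `n`-cube subpattern of a pattern `u` on `F_k` at the corner `v` (with
`v i + n ≤ k` for all `i`). -/
def subpatNK {A : Type*} {d n k : ℕ} (u : (Fin d → Fin k) → A)
    (v : Fin d → ℕ) (hv : ∀ i, v i + n ≤ k) : (Fin d → Fin n) → A :=
  fun t => u (fun i => ⟨v i + (t i : ℕ), by have h1 := (t i).isLt; have h2 := hv i; omega⟩)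

/-!
Tile `ℤ^d` by the cubes `ℓ p + F_ℓ` and fill the cube of `p` with the corner `F_ℓ` of an allowed
filling `W p` of `F_k` extending `b`. Since all fillings equal `b` on `∂_n F_k` and `b` is
`ℓ`-periodic there, every translate `ℓ p + F_k` then carries exactly `W p`; as every `n`-window
lies in one of these translates, the configuration belongs to `X`. Choosing `p ↦ W p` with period
`m` in each direction gives a totally periodic point whose pattern on a cube of side
`ℓ (m - 1) + k` determines the `m ^ d` chosen fillings, so `X` has at least `N ^ (m ^ d)` periodic
patterns of that size; letting `m → ∞` gives the bound.
-/

open Function Filter Topology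

theorem mem_bdryN_iff {d n k : ℕ} {x : Fin d → ℤ} :
    x ∈ bdryN d n k ↔ x ∈ Fcube d k ∧ ∃ j, x j ≤ n ∨ (k : ℤ) < x j + n := by
  constructor
  · rintro ⟨hx, y, hy, hxy⟩
    refine ⟨hx, ?_⟩
    by_contra! hint
    refine hy fun i => ?_
    have := abs_le.mp (hxy i)
    have := hint i
    constructor <;> omega
  · rintro ⟨hx, j, hj | hj⟩
    · refine ⟨hx, fun i => x i - n, fun hy => ?_, fun i => by simp⟩
      have : 1 ≤ x j - n ∧ x j - n ≤ k := hy j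
      omega
    · refine ⟨hx, fun i => x i + n, fun hy => ?_, fun i => by simp⟩
      have : 1 ≤ x j + n ∧ x j + n ≤ k := hy j
      omega

theorem natCast_add_one_mem_Fcube {d k : ℕ} (t : Fin d → Fin k) :
    (fun i => (t i : ℤ) + 1) ∈ Fcube d k := fun i => by
  have := (t i).isLt
  constructor <;> dsimp only <;> omega

theorem update_mem_bdryN {d n k : ℕ} {x : Fin d → ℤ} (hx : x ∈ Fcube d k) (j : Fin d) {y : ℤ}
    (hy : 1 ≤ y ∧ y ≤ k) (hyn : y ≤ n ∨ (k : ℤ) < y + n) : update x j y ∈ bdryN d n k := by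
  refine mem_bdryN_iff.2 ⟨fun i => ?_, j, by simpa using hyn⟩
  rcases eq_or_ne i j with rfl | hij
  · simpa using hy
  · simpa [hij] using hx i

def BdryPeriodic {A : Type*} (d n k ℓ : ℕ) (b : (Fin d → ℤ) → A) : Prop :=
  ∀ t ∈ bdryN d n k, ∀ i, update t i (t i + ℓ) ∈ bdryN d n k → b (update t i (t i + ℓ)) = b t

namespace BdryPeriodic

variable {A : Type*} {d n k ℓ : ℕ} {b : (Fin d → ℤ) → A} (hb : BdryPeriodic d n k ℓ b)
  (hℓ : k ≤ ℓ + n)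
include hb hℓ

theorem update_add_mul {t : Fin d → ℤ} (ht : t ∈ bdryN d n k) (j : Fin d) :
    ∀ m : ℕ, t j + ℓ * m ≤ k →
      update t j (t j + ℓ * m) ∈ bdryN d n k ∧ b (update t j (t j + ℓ * m)) = b t
  | 0, _ => by simpa using ht
  | m + 1, hm => by
    obtain ⟨hmem, heq⟩ := update_add_mul ht j m (by push_cast [mul_add_one] at hm; omega)
    -- the new point is in the boundary since its `j`-th coordinate exceeds `ℓ ≥ k - n`
    have hmem' : update t j (t j + ℓ * (m + 1 : ℕ)) ∈ bdryN d n k := by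
      have h1 := (ht.1 j).1
      have h2 : (ℓ : ℤ) ≤ ℓ * (m + 1 : ℕ) := by push_cast; nlinarith
      exact update_mem_bdryN ht.1 j ⟨by omega, hm⟩ (Or.inr (by omega))
    have hupd : update t j (t j + ℓ * (m + 1 : ℕ)) =
        update (update t j (t j + ℓ * m)) j (update t j (t j + ℓ * m) j + ℓ) := by
      rw [update_idem, update_self]
      push_cast
      ring_nf
    refine ⟨hmem', ?_⟩
    rw [hupd] at hmem' ⊢
    exact (hb _ hmem j hmem').trans heq

theorem update_of_dvd {t : Fin d → ℤ} (ht : t ∈ bdryN d n k) (j : Fin d) {y : ℤ}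
    (hy : 1 ≤ y ∧ y ≤ k) (hdvd : (ℓ : ℤ) ∣ y - t j) :
    update t j y ∈ bdryN d n k ∧ b (update t j y) = b t := by
  obtain ⟨c, hc⟩ := hdvd
  rcases le_total 0 c with hc0 | hc0
  · lift c to ℕ using hc0
    obtain rfl : y = t j + ℓ * c := by omega
    exact hb.update_add_mul hℓ ht j c hy.2
  obtain ⟨m, rfl⟩ := Int.exists_eq_neg_ofNat hc0
  have hy' : y + ℓ * m = t j := by linarith
  have hs : update t j y ∈ bdryN d n k := by
    rcases eq_or_ne m 0 with rfl | hm
    · obtain rfl : y = t j := by simpa using hy'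
      simpa using ht
    · have : (ℓ : ℤ) ≤ ℓ * m := le_mul_of_one_le_right (by positivity) (by omega)
      have := (ht.1 j).2
      exact update_mem_bdryN ht.1 j hy (Or.inl (by omega))
  have hback := hb.update_add_mul hℓ hs j m (by rw [update_self, hy']; exact (ht.1 j).2)
  rw [update_idem, update_self, hy', update_eq_self] at hback
  exact ⟨hs, hback.2.symm⟩

theorem eq_of_dvd_sub {t t' : Fin d → ℤ} (ht : t ∈ bdryN d n k) (ht' : t' ∈ bdryN d n k)
    (hdvd : ∀ i, (ℓ : ℤ) ∣ t' i - t i) : b t' = b t := by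
  classical
  have key : ∀ s : Finset (Fin d),
      s.piecewise t' t ∈ bdryN d n k ∧ b (s.piecewise t' t) = b t := by
    intro s
    induction s using Finset.induction_on with
    | empty => simpa using ht
    | insert j s hj ih =>
      rw [Finset.piecewise_insert]
      have hj' : s.piecewise t' t j = t j := Finset.piecewise_eq_of_notMem _ _ _ hj
      obtain ⟨hmem, heq⟩ := hb.update_of_dvd hℓ ih.1 j (ht'.1 j) (by rw [hj']; exact hdvd j)
      exact ⟨hmem, heq.trans ih.2⟩
  simpa using (key Finset.univ).2

end BdryPeriodic

-- `F_k = [1,k]^d` is indexed by `Fin d → Fin k` through `t ↦ t + 1`.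
def fillings {A : Type*} {d n : ℕ} (Forb : Set ((Fin d → Fin n) → A)) (b : (Fin d → ℤ) → A)
    (k : ℕ) : Set ((Fin d → Fin k) → A) :=
  {w | (∀ (v : Fin d → ℕ) (hv : ∀ i, v i + n ≤ k), subpatNK w v hv ∉ Forb) ∧
    ∀ t : Fin d → Fin k, (fun i => (t i : ℤ) + 1) ∈ bdryN d n k →
      w t = b (fun i => (t i : ℤ) + 1)}

section Concat

variable {A : Type*} {d k ℓ : ℕ} [NeZero ℓ]

def concat (hℓk : ℓ ≤ k) (W : (Fin d → ℤ) → (Fin d → Fin k) → A) (q : Fin d → ℤ) : A :=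
  W (fun i => (q i - 1) / ℓ) fun i => ⟨((q i - 1 : ℤ) : ZMod ℓ).val, (ZMod.val_lt _).trans_le hℓk⟩

theorem concat_apply_of_lt (hℓk : ℓ ≤ k) (W : (Fin d → ℤ) → (Fin d → Fin k) → A)
    (p : Fin d → ℤ) (r : Fin d → Fin k) (hr : ∀ i, (r i : ℕ) < ℓ) :
    concat hℓk W (fun i => ℓ * p i + 1 + r i) = W p r := by
  have hℓ0 : (ℓ : ℤ) ≠ 0 := by exact_mod_cast NeZero.ne ℓ
  unfold concat
  congr 1 <;> funext i
  · rw [show (ℓ : ℤ) * p i + 1 + r i - 1 = r i + ℓ * p i by ring, Int.add_mul_ediv_left _ _ hℓ0,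
      Int.ediv_eq_zero_of_lt (by positivity) (by exact_mod_cast hr i), zero_add]
  · ext
    simp [Nat.mod_eq_of_lt (hr i)]

theorem shiftZd_concat (hℓk : ℓ ≤ k) (W : (Fin d → ℤ) → (Fin d → Fin k) → A) (s : Fin d → ℤ) :
    shiftZd (fun i => ℓ * s i) (concat hℓk W) = concat hℓk fun p => W (s + p) := by
  have hℓ0 : (ℓ : ℤ) ≠ 0 := by exact_mod_cast NeZero.ne ℓ
  funext q
  simp only [shiftZd, concat]
  congr 1 <;> funext i
  · rw [show (ℓ : ℤ) * s i + q i - 1 = q i - 1 + ℓ * s i by ring, Int.add_mul_ediv_left _ _ hℓ0,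
      add_comm, Pi.add_apply]
  · ext
    simp

end Concat

section Fillings

variable {A : Type*} {d n k ℓ : ℕ} [NeZero ℓ] {Forb : Set ((Fin d → Fin n) → A)}
  {b : (Fin d → ℤ) → A} (hℓk : ℓ ≤ k) (hℓn : ℓ + n = k + 1) (hb : BdryPeriodic d n k ℓ b)
  {W : (Fin d → ℤ) → (Fin d → Fin k) → A} (hW : ∀ p, W p ∈ fillings Forb b k)
include hℓn hb hW

theorem concat_apply_of_fillings (p : Fin d → ℤ) (t : Fin d → Fin k) :
    concat hℓk W (fun i => ℓ * p i + 1 + t i) = W p t := by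
  by_cases hsmall : ∀ i, (t i : ℕ) < ℓ
  · exact concat_apply_of_lt hℓk W p t hsmall
  obtain ⟨j, hj⟩ := not_forall.1 hsmall
  rw [not_lt] at hj
  let r : Fin d → Fin k := fun i => ⟨t i % ℓ, (Nat.mod_lt _ (NeZero.pos ℓ)).trans_le hℓk⟩
  have hr : ∀ i, (r i : ℕ) < ℓ := fun i => Nat.mod_lt _ (NeZero.pos ℓ)
  have hdecomp : ∀ i, (t i : ℤ) = r i + ℓ * (t i / ℓ : ℕ) := fun i => by
    exact_mod_cast (Nat.mod_add_div (t i) ℓ).symm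
  have hrj : (r j : ℕ) + ℓ ≤ t j := by
    have := Nat.mod_add_div (t j) ℓ
    have : ℓ ≤ ℓ * (t j / ℓ) := Nat.le_mul_of_pos_right ℓ (Nat.div_pos hj (NeZero.pos ℓ))
    simp only [r]
    omega
  have ht : (fun i => (t i : ℤ) + 1) ∈ bdryN d n k :=
    mem_bdryN_iff.2 ⟨natCast_add_one_mem_Fcube t, j, Or.inr (by omega)⟩
  have hr' : (fun i => (r i : ℤ) + 1) ∈ bdryN d n k :=
    mem_bdryN_iff.2 ⟨natCast_add_one_mem_Fcube r, j, Or.inl (by have := (t j).isLt; omega)⟩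
  -- Outside `F_ℓ`, both `t` and its reduction `r` mod `ℓ`, where `concat` reads the value,
  -- lie in `∂_n F_k`; there the two fillings agree by the periodicity of `b`.
  calc concat hℓk W (fun i => ℓ * p i + 1 + t i)
      = W (fun i => p i + (t i / ℓ : ℕ)) r := by
        rw [← concat_apply_of_lt hℓk W _ r hr]
        congr 1
        funext i
        rw [hdecomp i]
        ring
    _ = b (fun i => (r i : ℤ) + 1) := (hW _).2 r hr'
    _ = b (fun i => (t i : ℤ) + 1) :=
        hb.eq_of_dvd_sub (by omega) ht hr' fun i => ⟨-(t i / ℓ : ℕ), by rw [hdecomp i]; ring⟩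
    _ = W p t := ((hW p).2 t ht).symm

theorem concat_mem_sftOf : concat hℓk W ∈ sftOf Forb := by
  intro v
  have hdecomp (i : Fin d) : ∃ p : ℤ, ∃ u : ℕ, u < ℓ ∧ v i = ℓ * p + 1 + u :=
    ⟨(v i - 1) / ℓ, ((v i - 1 : ℤ) : ZMod ℓ).val, ZMod.val_lt _, by
      rw [ZMod.val_intCast]
      linarith [Int.mul_ediv_add_emod (v i - 1) ℓ]⟩
  choose p u hu hv using hdecomp
  have hun : ∀ i, u i + n ≤ k := fun i => by have := hu i; omega
  have hwindow : patternOf (concat hℓk W) v = subpatNK (W p) u hun := by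
    funext t
    rw [subpatNK, ← concat_apply_of_fillings hℓk hℓn hb hW p]
    simp only [patternOf, hv]
    congr
    funext i
    push_cast
    ring
  rw [hwindow]
  exact (hW p).1 u hun

end Fillings

theorem shiftZd_orbit_finite {A : Type*} {d : ℕ} {x : (Fin d → ℤ) → A} (T : ℕ) [NeZero T]
    (hx : ∀ s : Fin d → ℤ, shiftZd (fun i => T * s i) x = x) :
    {y | ∃ p : Fin d → ℤ, y = shiftZd p x}.Finite := by
  refine (Set.finite_range fun r : Fin d → ZMod T =>
    shiftZd (fun i => ((r i).val : ℤ)) x).subset ?_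
  rintro _ ⟨p, rfl⟩
  refine ⟨fun i => p i, ?_⟩
  funext q
  have := congrFun (hx fun i => p i / T) (fun i => p i % T + q i)
  simp only [shiftZd, ZMod.val_intCast] at this ⊢
  rw [← this]
  congr
  funext i
  linarith [Int.mul_ediv_add_emod (p i) T]

section Counting

variable {A : Type*} [Fintype A] {d n k ℓ : ℕ} [NeZero ℓ] {Forb : Set ((Fin d → Fin n) → A)}
  {b : (Fin d → ℤ) → A}

theorem ncard_fillings_pow_le (hℓk : ℓ ≤ k) (hℓn : ℓ + n = k + 1) (hb : BdryPeriodic d n k ℓ b)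
    (m M : ℕ) [NeZero m] (hM : ℓ * m + k ≤ M + ℓ) :
    (fillings Forb b k).ncard ^ (m ^ d) ≤ (Wpat M (perPts (sftOf Forb))).ncard := by
  set S := fillings Forb b k
  let x (c : (Fin d → ZMod m) → S) : (Fin d → ℤ) → A :=
    concat hℓk fun p => (c fun i => (p i : ZMod m)).1
  have hx_per (c) : x c ∈ perPts (sftOf Forb) := by
    refine ⟨concat_mem_sftOf hℓk hℓn hb fun p => (c _).2,
      shiftZd_orbit_finite (ℓ * m) fun s => ?_⟩
    have : (fun i => ((ℓ * m : ℕ) : ℤ) * s i) = fun i => ℓ * (m * s i) := by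
      funext i
      push_cast
      ring
    rw [this, shiftZd_concat]
    congr
    funext p
    simp
  have hx_cell (c) (z : Fin d → ZMod m) (t : Fin d → Fin k) :
      x c (fun i => ℓ * ((z i).val : ℤ) + 1 + t i) = (c z).1 t := by
    simp only [x]
    rw [concat_apply_of_fillings hℓk hℓn hb fun p => (c _).2]
    simp
  let Φ (c) : Wpat M (perPts (sftOf Forb)) :=
    ⟨patternOf (x c) fun _ => 1, x c, hx_per c, fun _ => 1, fun _ => rfl⟩
  have hΦ : Injective Φ := by
    intro c c' h
    funext z
    apply Subtype.ext
    funext t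
    have hlt (i) : ℓ * (z i).val + t i < M := by
      have hz : ℓ * ((z i).val + 1) ≤ ℓ * m := Nat.mul_le_mul_left ℓ (ZMod.val_lt (z i))
      have := (t i).isLt
      rw [mul_add_one] at hz
      omega
    have := congrFun (congrArg Subtype.val h) fun i => ⟨ℓ * (z i).val + t i, hlt i⟩
    simp only [Φ, patternOf] at this
    rw [← hx_cell, ← hx_cell]
    convert this using 2 <;> funext i <;> push_cast <;> ring
  calc S.ncard ^ (m ^ d) = Nat.card ((Fin d → ZMod m) → S) := by
        simp [Nat.card_fun, Nat.card_coe_set_eq]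
    _ ≤ Nat.card (Wpat M (perPts (sftOf Forb))) := Nat.card_le_card_of_injective Φ hΦ
    _ = _ := Nat.card_coe_set_eq _

end Counting

theorem log_natCast_le_log_natCast {a b : ℕ} (h : a ≤ b) : Real.log a ≤ Real.log b := by
  rcases a.eq_zero_or_pos with rfl | ha
  · simpa using Real.log_natCast_nonneg b
  · exact Real.log_le_log (by exact_mod_cast ha) (by exact_mod_cast h)

section Entropy

variable {A : Type*} [Fintype A] {d : ℕ} {Y : Set ((Fin d → ℤ) → A)}

theorem log_ncard_Wpat_div_le (M : ℕ) :
    Real.log (Wpat M Y).ncard / (M : ℝ) ^ d ≤ Real.log (Fintype.card A) := by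
  have hcard : (Wpat M Y).ncard ≤ Fintype.card A ^ (M ^ d) := by
    simpa [Nat.card_fun] using Set.ncard_le_card (Wpat M Y)
  refine div_le_of_le_mul₀ (by positivity) (Real.log_natCast_nonneg _) ?_
  calc Real.log (Wpat M Y).ncard ≤ Real.log (Fintype.card A ^ (M ^ d) : ℕ) :=
        log_natCast_le_log_natCast hcard
    _ = Real.log (Fintype.card A) * (M : ℝ) ^ d := by
        push_cast
        rw [Real.log_pow]
        push_cast
        ring

theorem le_hTop_of_pow_le_ncard {ℓ c N : ℕ} (hℓ : 0 < ℓ)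
    (hN : ∀ m, 0 < m → N ^ (m ^ d) ≤ (Wpat (ℓ * m + c) Y).ncard) :
    Real.log N / ℓ ^ d ≤ hTop d Y := by
  set F : ℕ → ℝ := fun M => Real.log (Wpat M Y).ncard / (M : ℝ) ^ d
  have hbdd : IsBoundedUnder (· ≤ ·) atTop F := isBoundedUnder_of ⟨_, log_ncard_Wpat_div_le⟩
  have hlim : Tendsto (fun m : ℕ => Real.log N / ℓ ^ d * ((m : ℝ) / (m + c / ℓ)) ^ d) atTop
      (𝓝 (Real.log N / ℓ ^ d)) := by
    simpa using ((tendsto_natCast_div_add_atTop ((c : ℝ) / ℓ)).pow d).const_mul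
      (Real.log N / ℓ ^ d)
  have hle (m : ℕ) (hm : 0 < m) :
      Real.log N / ℓ ^ d * ((m : ℝ) / (m + c / ℓ)) ^ d ≤ F (ℓ * m + c) := by
    have hlog : (m : ℝ) ^ d * Real.log N ≤ Real.log (Wpat (ℓ * m + c) Y).ncard := by
      simpa [Real.log_pow] using log_natCast_le_log_natCast (hN m hm)
    have hsplit : Real.log N / ℓ ^ d * ((m : ℝ) / (m + c / ℓ)) ^ d =
        (m : ℝ) ^ d * Real.log N / ((ℓ * m + c : ℕ) : ℝ) ^ d := by
      have hℓ' : (ℓ : ℝ) ≠ 0 := by positivity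
      rw [show (m : ℝ) + c / ℓ = (ℓ * m + c) / ℓ by field_simp, div_div_eq_mul_div, div_pow,
        mul_pow]
      push_cast
      field_simp
    rw [hsplit]
    exact div_le_div_of_nonneg_right hlog (by positivity)
  refine le_of_forall_lt_imp_le_of_dense fun a ha => le_limsup_of_frequently_le ?_ hbdd
  have hev : ∀ᶠ m in atTop, a ≤ F (ℓ * m + c) :=
    ((hlim.eventually (lt_mem_nhds ha)).and (eventually_gt_atTop 0)).mono
      fun m hm => hm.1.le.trans (hle m hm.2)
  have hφ : Tendsto (fun m => ℓ * m + c) atTop atTop :=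
    tendsto_atTop_mono (fun m => (Nat.le_mul_of_pos_left m hℓ).trans (Nat.le_add_right _ c))
      tendsto_id
  exact hφ.frequently hev.frequently

end Entropy

theorem Wpat_mono {A : Type*} {d M : ℕ} {Y Y' : Set ((Fin d → ℤ) → A)} (h : Y ⊆ Y') :
    Wpat M Y ⊆ Wpat M Y' := fun _ ⟨x, hx, v, hv⟩ => ⟨x, h hx, v, hv⟩

theorem stmt17_general {A : Type*} [Fintype A] {d n k : ℕ} (hn : 1 ≤ n) (hk : n < k)
    (Forb : Set ((Fin d → Fin n) → A)) (b : (Fin d → ℤ) → A) (N : ℕ)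
    (hper : ∀ t ∈ bdryN d n k, ∀ i : Fin d,
      (fun j => t j + if j = i then ((k - n + 1 : ℕ) : ℤ) else 0) ∈ bdryN d n k →
      b (fun j => t j + if j = i then ((k - n + 1 : ℕ) : ℤ) else 0) = b t)
    (hcount : N ≤ Set.ncard {w : (Fin d → Fin k) → A |
      (∀ (v : Fin d → ℕ) (hv : ∀ i, v i + n ≤ k), subpatNK w v hv ∉ Forb) ∧
      (∀ t : Fin d → Fin k, (fun i => ((t i : ℤ) + 1)) ∈ bdryN d n k →
        w t = b (fun i => (t i : ℤ) + 1))}) :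
    Real.log N / ((k - n + 1 : ℕ) : ℝ) ^ d ≤ hTop d (perPts (sftOf Forb)) ∧
    Real.log N / ((k - n + 1 : ℕ) : ℝ) ^ d ≤ hTop d (sftOf Forb) := by
  have hℓk : k - n + 1 ≤ k := by omega
  have hℓn : k - n + 1 + n = k + 1 := by omega
  have hb : BdryPeriodic d n k (k - n + 1) b := fun t ht i => by
    have hupd : update t i (t i + (k - n + 1 : ℕ)) =
        fun j => t j + if j = i then ((k - n + 1 : ℕ) : ℤ) else 0 := by
      funext j
      rcases eq_or_ne j i with rfl | hji <;> simp [*]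
    rw [hupd]
    exact hper t ht i
  have hperPts (m : ℕ) (hm : 0 < m) :
      N ^ (m ^ d) ≤ (Wpat ((k - n + 1) * m + (n - 1)) (perPts (sftOf Forb))).ncard :=
    have : NeZero m := ⟨hm.ne'⟩
    (Nat.pow_le_pow_left hcount _).trans (ncard_fillings_pow_le hℓk hℓn hb m _ (by omega))
  have hsft (m : ℕ) (hm : 0 < m) :
      N ^ (m ^ d) ≤ (Wpat ((k - n + 1) * m + (n - 1)) (sftOf Forb)).ncard :=
    (hperPts m hm).trans (Set.ncard_le_ncard (Wpat_mono fun _ hx => hx.1) (Set.toFinite _))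
  exact ⟨le_hTop_of_pow_le_ncard (by omega) hperPts, le_hTop_of_pow_le_ncard (by omega) hsft⟩

/-- If `b` is a pattern on `∂_n F_k` that is `ℓ`-periodic (`ℓ = k − n + 1`) in each
cardinal direction and there are `N ≥ 1` locally allowed patterns on `F_k` extending `b`,
then `h_per(X) ≥ (1/ℓ^d)·log N`, and in particular `h(X) ≥ (1/ℓ^d)·log N`. -/
theorem stmt17 {A : Type*} [Fintype A] {d n k : ℕ} (hd : 1 ≤ d) (hn : 1 ≤ n) (hk : n < k)
    (Forb : Set ((Fin d → Fin n) → A)) (b : (Fin d → ℤ) → A) (N : ℕ) (hN : 1 ≤ N)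
    (hper : ∀ t ∈ bdryN d n k, ∀ i : Fin d,
      (fun j => t j + if j = i then ((k - n + 1 : ℕ) : ℤ) else 0) ∈ bdryN d n k →
      b (fun j => t j + if j = i then ((k - n + 1 : ℕ) : ℤ) else 0) = b t)
    (hcount : N ≤ Set.ncard {w : (Fin d → Fin k) → A |
      (∀ (v : Fin d → ℕ) (hv : ∀ i, v i + n ≤ k), subpatNK w v hv ∉ Forb) ∧
      (∀ t : Fin d → Fin k, (fun i => ((t i : ℤ) + 1)) ∈ bdryN d n k →
        w t = b (fun i => (t i : ℤ) + 1))}) :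
    Real.log N / ((k - n + 1 : ℕ) : ℝ) ^ d ≤ hTop d (perPts (sftOf Forb)) ∧
    Real.log N / ((k - n + 1 : ℕ) : ℝ) ^ d ≤ hTop d (sftOf Forb) :=
  stmt17_general hn hk Forb b N hper hcount
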